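/- Let 𝔹 = {q ∈ ℍ : |q| < 1} be the open unit ball and let f : 𝔹 → ℍ be a slice regular function with |f(q)| < 1 for all q ∈ 𝔹 and f(0) ≠ 0. Then f has no zero in the ball of radius |f(0)|: for every q ∈ ℍ with |q| < |f(0)|, f(q) ≠ 0. -/

import Mathlib

open Quaternion MeasureTheory Metric Filter

noncomputable section

abbrev H4 := Quaternion ℝ

/-- The 2-sphere of quaternionic imaginary units. -/
def Sph : Set H4 := {q : H4 | q ^ 2 = -1}

/-- A circular subset of the quaternions. -/
def IsCircular (Ω : Set H4) : Prop :=
  ∀ (x y : ℝ), ∀ I ∈ Sph, ∀ J ∈ Sph, (x : H4) + y • I ∈ Ω → (x : H4) + y • J ∈ Ω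

/-- Slice functions: functions satisfying the representation formula on Ω. -/
def IsSliceOn (Ω : Set H4) (f : H4 → H4) : Prop :=
  ∀ (x y : ℝ), ∀ I ∈ Sph, ∀ J ∈ Sph, (x : H4) + y • I ∈ Ω →
    f ((x : H4) + y • J)
      = (1 - J * I) / 2 * f ((x : H4) + y • I) + (1 + J * I) / 2 * f ((x : H4) - y • I)

/-- Slice regular functions on a circular set: slice, real differentiable,
and satisfying the Cauchy–Riemann equation on every slice. -/
def IsSliceRegularOn (Ω : Set H4) (f : H4 → H4) : Prop :=
  IsSliceOn Ω f ∧ DifferentiableOn ℝ f Ω ∧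
    ∀ (x y : ℝ), ∀ I ∈ Sph, (x : H4) + y • I ∈ Ω →
      fderiv ℝ f ((x : H4) + y • I) 1 + I * fderiv ℝ f ((x : H4) + y • I) I = 0

/-- Anti-regular slice functions. -/
def IsAntiRegularOn (Ω : Set H4) (f : H4 → H4) : Prop :=
  IsSliceOn Ω f ∧ DifferentiableOn ℝ f Ω ∧
    ∀ (x y : ℝ), ∀ I ∈ Sph, (x : H4) + y • I ∈ Ω →
      fderiv ℝ f ((x : H4) + y • I) 1 - I * fderiv ℝ f ((x : H4) + y • I) I = 0

/-- Slice Laplacian of `f` along the slice of `I`: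
`∂²f/∂x² + ∂²f/∂y²` where derivatives are taken in the directions `1` and `I`. -/
def lapSlice (f : H4 → H4) (I q : H4) : H4 :=
  fderiv ℝ (fun p => fderiv ℝ f p 1) q 1 + fderiv ℝ (fun p => fderiv ℝ f p I) q I

/-- Slice Laplacian for real-valued functions. -/
def lapSliceR (u : H4 → ℝ) (I q : H4) : ℝ :=
  fderiv ℝ (fun p => fderiv ℝ u p 1) q 1 + fderiv ℝ (fun p => fderiv ℝ u p I) q I

/-- The circularization Ω_D of a subset D of ℂ. -/
def circSet (D : Set ℂ) : Set H4 :=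
  {q : H4 | ∃ (x y : ℝ), ∃ I ∈ Sph, (x + y * Complex.I) ∈ D ∧ q = (x : H4) + y • I}

section SliceHelpers

lemma mem_sph_iff {I : H4} : I ∈ Sph ↔ I.re = 0 ∧ I.imI^2 + I.imJ^2 + I.imK^2 = 1 := by
  constructor
  · intro h
    have h' : I * I = -1 := by rw [← sq]; exact h
    have e1 := congrArg QuaternionAlgebra.re h'
    have e2 := congrArg QuaternionAlgebra.imI h'
    have e3 := congrArg QuaternionAlgebra.imJ h'
    have e4 := congrArg QuaternionAlgebra.imK h'
    simp [Quaternion.re_mul, Quaternion.imI_mul, Quaternion.imJ_mul, Quaternion.imK_mul] at e1 e2 e3 e4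
    have hre : I.re = 0 := by
      by_contra hre
      have hx : I.imI = 0 := by
        have h5 : I.re * I.imI = 0 := by linarith
        rcases mul_eq_zero.mp h5 with h | h
        · exact absurd h hre
        · exact h
      have hy : I.imJ = 0 := by
        have h5 : I.re * I.imJ = 0 := by linarith
        rcases mul_eq_zero.mp h5 with h | h
        · exact absurd h hre
        · exact h
      have hz : I.imK = 0 := by
        have h5 : I.re * I.imK = 0 := by linarith
        rcases mul_eq_zero.mp h5 with h | h
        · exact absurd h hre
        · exact h
      rw [hx, hy, hz] at e1
      nlinarith [sq_nonneg I.re]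
    exact ⟨hre, by nlinarith [e1, hre]⟩
  · rintro ⟨h1, h2⟩
    show I ^ 2 = -1
    rw [sq]
    ext <;>
      simp [Quaternion.re_mul, Quaternion.imI_mul, Quaternion.imJ_mul, Quaternion.imK_mul, h1] <;>
      nlinarith [h2]

lemma re_mul_comm (p q : H4) : (p * q).re = (q * p).re := by
  simp [Quaternion.re_mul]; ring

lemma normSq_eq (q : H4) : Quaternion.normSq q = ‖q‖^2 := by
  rw [Quaternion.normSq_eq_norm_mul_self, sq]

/-- decomposition of a quaternion along a slice -/
lemma quat_decomp (q : H4) : ∃ (x y : ℝ) (I : H4), I ∈ Sph ∧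
    q = (x : H4) + y • I ∧ x ^ 2 + y ^ 2 = ‖q‖ ^ 2 := by
  set n : ℝ := Real.sqrt (q.imI^2 + q.imJ^2 + q.imK^2) with hn
  have hnsq : n ^ 2 = q.imI^2 + q.imJ^2 + q.imK^2 := by
    rw [hn, Real.sq_sqrt]; positivity
  have hnorm : ‖q‖^2 = q.re^2 + (q.imI^2 + q.imJ^2 + q.imK^2) := by
    rw [← normSq_eq, Quaternion.normSq_def']; ring
  by_cases h0 : n = 0
  · refine ⟨q.re, 0, ⟨0,1,0,0⟩, ?_, ?_, ?_⟩
    · refine mem_sph_iff.mpr ⟨rfl, ?_⟩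
      show (1:ℝ)^2 + 0^2 + 0^2 = 1; norm_num
    · have h1 : q.imI = 0 ∧ q.imJ = 0 ∧ q.imK = 0 := by
        rw [h0] at hnsq
        refine ⟨?_, ?_, ?_⟩ <;> nlinarith [sq_nonneg q.imI, sq_nonneg q.imJ, sq_nonneg q.imK]
      ext <;> show _ = _ + (0:ℝ) * _ <;> simp [h1.1, h1.2.1, h1.2.2]
    · rw [hnorm, ← hnsq, h0]
  · refine ⟨q.re, n, ⟨0, q.imI / n, q.imJ / n, q.imK / n⟩, ?_, ?_, ?_⟩
    · refine mem_sph_iff.mpr ?_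
      constructor
      · rfl
      · show (q.imI / n)^2 + (q.imJ / n)^2 + (q.imK / n)^2 = 1
        field_simp
        simpa using hnsq.symm
    · have hc : ∀ t : ℝ, n * (t / n) = t := fun t => by field_simp
      ext
      · show _ = _ + n * _; simp
      · show _ = _ + n * _; simp [hc]
      · show _ = _ + n * _; simp [hc]
      · show _ = _ + n * _; simp [hc]
    · rw [hnorm, hnsq]

/-- the embedding of ℂ into the slice of `I`, as a continuous linear map. -/
noncomputable def iotaC (I : H4) : ℂ →L[ℝ] H4 :=
  Complex.reCLM.smulRight (1 : H4) + Complex.imCLM.smulRight I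

lemma iotaC_apply (I : H4) (z : ℂ) : iotaC I z = (z.re : H4) + z.im • I := by
  simp only [iotaC, ContinuousLinearMap.add_apply, ContinuousLinearMap.smulRight_apply,
    Complex.reCLM_apply, Complex.imCLM_apply]
  rw [show z.re • (1:H4) = ((z.re : ℝ) : H4) * 1 by rw [Quaternion.coe_mul_eq_smul], mul_one]

lemma iotaC_norm {I : H4} (hI : I ∈ Sph) (z : ℂ) : ‖iotaC I z‖ = ‖z‖ := by
  rw [mem_sph_iff] at hI
  have h1 : ‖iotaC I z‖^2 = (‖z‖)^2 := by
    rw [← normSq_eq, Quaternion.normSq_def', Complex.sq_norm, Complex.normSq_apply, iotaC_apply]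
    simp [hI.1]
    nlinarith [hI.2]
  have h2 : (0:ℝ) ≤ ‖iotaC I z‖ := norm_nonneg _
  have h3 : (0:ℝ) ≤ ‖z‖ := norm_nonneg z
  nlinarith

/-- the complex-valued functional `v ↦ Λ(v w)` on the slice of `I`. -/
noncomputable def lam (w I : H4) : H4 →L[ℝ] ℂ where
  toLinearMap :=
    { toFun := fun v => Complex.mk ((v * w).re) (-((v * w * I).re))
      map_add' := fun u v => by
        apply Complex.ext <;> simp [add_mul] <;> ring
      map_smul' := fun r v => by
        apply Complex.ext <;>
          simp [smul_mul_assoc, Complex.real_smul, Complex.ofReal_mul'] <;> ring }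
  cont := by
    have hc : Continuous fun v : H4 => v * w := continuous_id.mul continuous_const
    simp only [LinearMap.coe_mk, AddHom.coe_mk, Complex.mk_eq_add_mul_I]
    exact (Complex.continuous_ofReal.comp (Quaternion.continuous_re.comp hc)).add
      ((Complex.continuous_ofReal.comp
        ((Quaternion.continuous_re.comp (hc.mul continuous_const)).neg)).mul continuous_const)

lemma lam_apply (w I v : H4) :
    lam w I v = Complex.mk ((v * w).re) (-((v * w * I).re)) := rfl

lemma sph_mul_self {I : H4} (hI : I ∈ Sph) : I * I = -1 := by rw [← sq]; exact hI

lemma lam_I {I : H4} (hI : I ∈ Sph) (w v : H4) :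
    lam w I (I * v) = Complex.I * lam w I v := by
  have hII := sph_mul_self hI
  apply Complex.ext
  · show (I * v * w).re = _
    have : (Complex.I * lam w I v).re = -(lam w I v).im := by simp
    rw [this]
    show (I * v * w).re = -(-((v * w * I).re))
    rw [neg_neg, mul_assoc, re_mul_comm]
  · show -((I * v * w * I).re) = _
    have : (Complex.I * lam w I v).im = (lam w I v).re := by simp
    rw [this]
    show -((I * v * w * I).re) = (v * w).re
    have e : I * v * w * I = I * (v * w * I) := by rw [mul_assoc I v w, mul_assoc]
    rw [e, re_mul_comm]
    have e2 : v * w * I * I = -(v * w) := by rw [mul_assoc, hII, mul_neg_one]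
    rw [e2]
    simp

lemma lam_abs_le {I : H4} (hI : I ∈ Sph) (w v : H4) :
    ‖lam w I v‖ ≤ ‖v‖ * ‖w‖ := by
  rw [mem_sph_iff] at hI
  set p := v * w with hp
  have key : (‖lam w I v‖)^2 ≤ (‖v‖ * ‖w‖)^2 := by
    have h1 : (‖lam w I v‖)^2 = (p.re)^2 + ((p * I).re)^2 := by
      rw [Complex.sq_norm, Complex.normSq_apply, lam_apply]
      simp [← hp]
      try ring
    have h2 : (p * I).re = -(p.imI * I.imI + p.imJ * I.imJ + p.imK * I.imK) := by
      rw [Quaternion.re_mul, hI.1]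
      ring
    have h3 : (‖v‖ * ‖w‖)^2 = p.re^2 + p.imI^2 + p.imJ^2 + p.imK^2 := by
      rw [← norm_mul, ← hp, ← normSq_eq, Quaternion.normSq_def']
      try ring
    rw [h1, h2, h3]
    nlinarith [sq_nonneg (p.imI * I.imJ - p.imJ * I.imI),
      sq_nonneg (p.imI * I.imK - p.imK * I.imI),
      sq_nonneg (p.imJ * I.imK - p.imK * I.imJ), hI.2]
  nlinarith [norm_nonneg (lam w I v),
    mul_nonneg (norm_nonneg v) (norm_nonneg w)]

lemma holo_slice {f : H4 → H4} {I : H4} (w : H4) (hI : I ∈ Sph) {z : ℂ}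
    (hd : DifferentiableAt ℝ f (iotaC I z))
    (hcr : fderiv ℝ f (iotaC I z) 1 + I * fderiv ℝ f (iotaC I z) I = 0) :
    DifferentiableAt ℂ (fun z => lam w I (f (iotaC I z))) z := by
  have hII := sph_mul_self hI
  set p := iotaC I z with hp
  set D := fderiv ℝ f p with hD
  set L : ℂ →L[ℝ] ℂ := (lam w I).comp (D.comp (iotaC I)) with hL
  have hF : HasFDerivAt (fun z => lam w I (f (iotaC I z))) L z := by
    exact ((lam w I).hasFDerivAt.comp z ((hd.hasFDerivAt).comp z ((iotaC I).hasFDerivAt)))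
  set c : ℂ := L 1 with hc
  set L' : ℂ →L[ℂ] ℂ := c • (ContinuousLinearMap.id ℂ ℂ) with hL'
  have e1 : iotaC I (1 : ℂ) = 1 := by rw [iotaC_apply]; simp
  have e2 : iotaC I Complex.I = I := by rw [iotaC_apply]; simp
  have hDI : D I = I * D 1 := by
    have h1 : I * (D 1 + I * D I) = 0 := by rw [hcr, mul_zero]
    have h2 : I * (D 1) + (I * I) * (D I) = 0 := by
      rw [mul_add, ← mul_assoc] at h1; exact h1
    rw [hII] at h2
    rw [neg_one_mul] at h2
    exact (add_neg_eq_zero.mp h2).symm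
  have hLi : L Complex.I = Complex.I * c := by
    show lam w I (D (iotaC I Complex.I)) = _
    rw [e2, hDI, lam_I hI]
    have : c = lam w I (D (iotaC I 1)) := rfl
    rw [this, e1]
  have hrs : L'.restrictScalars ℝ = L := by
    apply ContinuousLinearMap.ext
    intro u
    have hu : (u : ℂ) = (u.re : ℝ) • (1:ℂ) + (u.im : ℝ) • Complex.I := by
      simp [Complex.real_smul, Complex.re_add_im]
    have lhs : (L'.restrictScalars ℝ) u = c * u := by
      simp [hL', smul_eq_mul]
    rw [lhs]
    conv_rhs => rw [hu]
    rw [map_add, _root_.map_smul, _root_.map_smul, hLi, ← hc]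
    rw [Complex.real_smul, Complex.real_smul]
    conv_lhs => rw [hu]
    rw [Complex.real_smul, Complex.real_smul]
    ring
  exact (hasFDerivAt_of_restrictScalars ℝ hF hrs).differentiableAt


end SliceHelpers

/-- a self-map of the unit ball has no zeros in the ball of
radius |f(0)|. -/
theorem stmt_18 (f : H4 → H4) (hf : IsSliceRegularOn (Metric.ball (0 : H4) 1) f)
    (hbd : ∀ q ∈ Metric.ball (0 : H4) 1, ‖f q‖ < 1) (h0 : f 0 ≠ 0) :
    ∀ q : H4, ‖q‖ < ‖f 0‖ → f q ≠ 0 := by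
  intro q hq hfq
  obtain ⟨hslice, hdiff, hcr⟩ := hf
  have hball0 : (0:H4) ∈ Metric.ball (0:H4) 1 := by simp
  have hf0lt : ‖f 0‖ < 1 := hbd 0 hball0
  have hf0pos : 0 < ‖f 0‖ := norm_pos_iff.mpr h0
  obtain ⟨x, y, I, hI, hqd, hxy⟩ := quat_decomp q
  set z0 : ℂ := ⟨x, y⟩ with hz0
  have habsz0 : ‖z0‖ = ‖q‖ := by
    have h1 : (‖z0‖)^2 = ‖q‖^2 := by
      rw [Complex.sq_norm, Complex.normSq_apply]
      show x * x + y * y = ‖q‖^2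
      rw [← hxy]; ring
    nlinarith [norm_nonneg z0, norm_nonneg q]
  have hiota_z0 : iotaC I z0 = q := by rw [iotaC_apply]; exact hqd.symm
  set w : H4 := ‖f 0‖⁻¹ • star (f 0) with hw
  have hwnorm : ‖w‖ = 1 := by
    rw [hw, norm_smul, Quaternion.norm_star, Real.norm_eq_abs,
      abs_of_nonneg (inv_nonneg.mpr hf0pos.le), inv_mul_cancel₀ hf0pos.ne']
  set h : ℂ → ℂ := fun z => lam w I (f (iotaC I z)) with hh
  have hmem : ∀ z : ℂ, z ∈ Metric.ball (0:ℂ) 1 → iotaC I z ∈ Metric.ball (0:H4) 1 := by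
    intro z hz
    rw [mem_ball_zero_iff] at hz ⊢
    rw [iotaC_norm hI]
    exact hz
  have hdiffh : ∀ z ∈ Metric.ball (0:ℂ) 1, DifferentiableAt ℂ h z := by
    intro z hz
    have hm := hmem z hz
    have hm' := hm
    rw [iotaC_apply] at hm'
    have hdA : DifferentiableAt ℝ f (iotaC I z) :=
      (hdiff (iotaC I z) hm).differentiableAt (Metric.isOpen_ball.mem_nhds hm)
    exact holo_slice w hI hdA (by rw [iotaC_apply]; exact hcr z.re z.im I hI hm')
  have habsh : ∀ z ∈ Metric.ball (0:ℂ) 1, ‖h z‖ < 1 := by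
    intro z hz
    calc ‖h z‖ ≤ ‖f (iotaC I z)‖ * ‖w‖ := lam_abs_le hI _ _
    _ = ‖f (iotaC I z)‖ := by rw [hwnorm, mul_one]
    _ < 1 := hbd _ (hmem z hz)
  have hz0ball : z0 ∈ Metric.ball (0:ℂ) 1 := by
    rw [mem_ball_zero_iff, habsz0]; exact hq.trans hf0lt
  have habsz0' : ‖z0‖ < 1 := by
    exact mem_ball_zero_iff.mp hz0ball
  have hh_z0 : h z0 = 0 := by
    rw [hh]
    simp only [hiota_z0, hfq]
    exact map_zero (lam w I)
  have hh_0 : h 0 = (‖f 0‖ : ℂ) := by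
    have hi0 : iotaC I (0:ℂ) = 0 := map_zero _
    have hfw : f 0 * w = ((‖f 0‖ : ℝ) : H4) := by
      rw [hw, mul_smul_comm, Quaternion.self_mul_star, Quaternion.smul_coe]
      congr 1
      rw [normSq_eq]
      field_simp
    rw [hh]
    simp only [hi0]
    rw [lam_apply, hfw]
    have hIre : I.re = 0 := (mem_sph_iff.mp hI).1
    apply Complex.ext
    · simp
    · show -((((‖f 0‖ : ℝ) : H4) * I).re) = (‖f 0‖ : ℂ).im
      rw [Quaternion.coe_mul_eq_smul]
      simp [hIre]
  set φ : ℂ → ℂ := fun z => (z0 - z) / (1 - (starRingEnd ℂ) z0 * z) with hφ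
  have hden : ∀ z ∈ Metric.ball (0:ℂ) 1, 1 - (starRingEnd ℂ) z0 * z ≠ 0 := by
    intro z hz hcon
    have h1 : ‖(starRingEnd ℂ) z0 * z‖ < 1 := by
      rw [norm_mul, Complex.norm_conj]
      have hza : ‖z‖ < 1 := by
        exact mem_ball_zero_iff.mp hz
      nlinarith [norm_nonneg z0, norm_nonneg z]
    have h2 : (starRingEnd ℂ) z0 * z = 1 := by linear_combination -hcon
    rw [h2] at h1
    simp at h1
  have hφmaps : Set.MapsTo φ (Metric.ball (0:ℂ) 1) (Metric.ball (0:ℂ) 1) := by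
    intro z hz
    show φ z ∈ Metric.ball (0:ℂ) 1
    rw [mem_ball_zero_iff]
    show ‖(z0 - z) / (1 - (starRingEnd ℂ) z0 * z)‖ < 1
    rw [norm_div, div_lt_one (norm_pos_iff.mpr (hden z hz))]
    have key : Complex.normSq (1 - (starRingEnd ℂ) z0 * z) - Complex.normSq (z0 - z)
        = (1 - Complex.normSq z0) * (1 - Complex.normSq z) := by
      simp only [Complex.normSq_apply, Complex.sub_re, Complex.sub_im, Complex.mul_re,
        Complex.mul_im, Complex.one_re, Complex.one_im, Complex.conj_re, Complex.conj_im]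
      ring
    have hns0 : Complex.normSq z0 < 1 := by
      rw [← Complex.sq_norm]; nlinarith [norm_nonneg z0]
    have hnsz : Complex.normSq z < 1 := by
      have hza : ‖z‖ < 1 := by
        exact mem_ball_zero_iff.mp hz
      rw [← Complex.sq_norm]; nlinarith [norm_nonneg z]
    have hlt : Complex.normSq (z0 - z) < Complex.normSq (1 - (starRingEnd ℂ) z0 * z) := by
      nlinarith
    rw [← Complex.sq_norm, ← Complex.sq_norm] at hlt
    nlinarith [norm_nonneg (z0 - z), norm_nonneg (1 - (starRingEnd ℂ) z0 * z)]
  have hφdiff : DifferentiableOn ℂ φ (Metric.ball (0:ℂ) 1) := by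
    apply DifferentiableOn.div
    · exact (differentiable_const z0 |>.sub differentiable_id).differentiableOn
    · exact (differentiable_const (1:ℂ) |>.sub
        ((differentiable_const ((starRingEnd ℂ) z0)).mul differentiable_id)).differentiableOn
    · exact hden
  have hhdiffOn : DifferentiableOn ℂ h (Metric.ball (0:ℂ) 1) :=
    fun z hz => (hdiffh z hz).differentiableWithinAt
  have hgdiff : DifferentiableOn ℂ (h ∘ φ) (Metric.ball (0:ℂ) 1) :=
    hhdiffOn.comp hφdiff hφmaps
  have hgmaps : Set.MapsTo (h ∘ φ) (Metric.ball (0:ℂ) 1) (Metric.ball (0:ℂ) 1) :=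
    fun z hz => mem_ball_zero_iff.mpr (by
      exact habsh _ (hφmaps hz))
  have hφ0 : φ 0 = z0 := by
    show (z0 - 0) / (1 - (starRingEnd ℂ) z0 * 0) = z0
    simp
  have hφz0 : φ z0 = 0 := by
    show (z0 - z0) / (1 - (starRingEnd ℂ) z0 * z0) = 0
    simp
  have hg0 : (h ∘ φ) 0 = 0 := by
    show h (φ 0) = 0
    rw [hφ0, hh_z0]
  have hS := Complex.norm_le_norm_of_mapsTo_ball hgdiff (hgmaps.mono_right Metric.ball_subset_closedBall) hg0 habsz0'
  have hgz0 : (h ∘ φ) z0 = (‖f 0‖ : ℂ) := by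
    show h (φ z0) = _
    rw [hφz0, hh_0]
  rw [hgz0] at hS
  rw [Complex.norm_real, Real.norm_eq_abs, abs_of_nonneg hf0pos.le, habsz0] at hS
  linarith
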